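/- (Langevin drift of the one-dimensional WN process.) The function θ ↦ f_WN(θ; μ, v∞) is differentiable on ℝ and the Langevin drift (σ²/2)·(d/dθ) log f_WN(θ; μ, v∞) equals the WN-process drift α·(μ − θ − ∑_{k ∈ ℤ} 2kπ·w_k(θ)) for every θ ∈ ℝ; in particular the series ∑_{k ∈ ℤ} 2kπ·w_k(θ) converges for every θ. -/

import Mathlib

open MeasureTheory Real

/-- Centered Gaussian density with variance `v` on `ℝ`. -/
noncomputable def gaussDens (v x : ℝ) : ℝ :=
  (Real.sqrt (2 * Real.pi * v))⁻¹ * Real.exp (-(x ^ 2) / (2 * v))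

/-- Wrapped normal density `f_WN(θ; μ, v)`. -/
noncomputable def fWN (μ v θ : ℝ) : ℝ :=
  ∑' k : ℤ, gaussDens v (θ - μ + 2 * (k : ℝ) * Real.pi)

/-- Winding-number weights `w_k(θ)` with stationary variance `v∞ = σ²/(2α)`. -/
noncomputable def wnWeight (α μ σ : ℝ) (k : ℤ) (θ : ℝ) : ℝ :=
  gaussDens (σ ^ 2 / (2 * α)) (θ - μ + 2 * (k : ℝ) * Real.pi) / fWN μ (σ ^ 2 / (2 * α)) θ

/-- Conditional mean `μ_t^m(θ_s) = μ + e^{−αt}(θ_s − μ + 2mπ)`. -/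
noncomputable def wouMean (α μ : ℝ) (t : ℝ) (m : ℤ) (θs : ℝ) : ℝ :=
  μ + Real.exp (-(α * t)) * (θs - μ + 2 * (m : ℝ) * Real.pi)

/-- Conditional variance `γ_t = σ²(1 − e^{−2αt})/(2α)`. -/
noncomputable def wouVar (α σ t : ℝ) : ℝ :=
  σ ^ 2 * (1 - Real.exp (-(2 * α * t))) / (2 * α)

/-- The WOU conditional density `p_t(θ | θ_s)`. -/
noncomputable def pWOU (α μ σ t θ θs : ℝ) : ℝ :=
  ∑' m : ℤ, wnWeight α μ σ m θs * fWN (wouMean α μ t m θs) (wouVar α σ t) θ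

/-! The terms `φ_v(θ - μ + 2kπ)` of `f_WN` and their derivatives `-(y/v) φ_v(y)` are dominated,
uniformly for `θ` in a unit ball, by the summable sequence `C exp (-(θ - μ + 2kπ)² / (8v))`
(because `(a + h)² ≥ a²/2 - h²`), so `f_WN` may be differentiated termwise. Splitting
`y_k = (θ - μ) + 2kπ` turns `∑ y_k φ_v(y_k)` into `(θ - μ) f_WN + ∑ 2kπ φ_v(y_k)`; dividing by
`f_WN > 0` and using `σ²/2 = α v∞` gives the drift. -/

lemma exp_neg_sq_add_div_le {w : ℝ} (hw : 0 < w) (a h : ℝ) :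
    exp (-(a + h) ^ 2 / w) ≤ exp (h ^ 2 / w) * exp (-a ^ 2 / (2 * w)) := by
  rw [← exp_add, exp_le_exp]
  calc -(a + h) ^ 2 / w ≤ -(a ^ 2 / 2 - h ^ 2) / w := by
        gcongr
        nlinarith [sq_nonneg (a + 2 * h)]
    _ = h ^ 2 / w + -a ^ 2 / (2 * w) := by ring

lemma summable_exp_neg_sq_add_int_mul_div {w : ℝ} (hw : 0 < w) (b : ℝ) {p : ℝ} (hp : p ≠ 0) :
    Summable fun k : ℤ => exp (-(b + k * p) ^ 2 / w) := by
  have hT : 0 < p ^ 2 / (2 * π * w) := by positivity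
  -- with `S = 0` the Jacobi theta bound is the Gaussian `exp (-π T k²)`
  refine (((summable_pow_mul_jacobiTheta₂_term_bound 0 hT 0).mul_left
    (exp (b ^ 2 / w)))).of_nonneg_of_le (fun _ => (exp_pos _).le) fun k => ?_
  rw [add_comm b]
  convert exp_neg_sq_add_div_le hw (k * p) b using 3
  field_simp
  simp

lemma summable_exp_neg_sq_add_two_mul_int_mul_pi {w : ℝ} (hw : 0 < w) (b : ℝ) :
    Summable fun k : ℤ => exp (-(b + 2 * k * π) ^ 2 / w) :=
  (summable_exp_neg_sq_add_int_mul_div hw b two_pi_pos.ne').congr fun k => by ring_nf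

lemma abs_mul_exp_neg_sq_div_le {w : ℝ} (hw : 0 < w) (y : ℝ) :
    |y| * exp (-y ^ 2 / (2 * w)) ≤ (1 + 4 * w) * exp (-y ^ 2 / (4 * w)) := by
  have h_abs : |y| ≤ 1 + y ^ 2 := by nlinarith [sq_nonneg (|y| - 1), sq_abs y]
  have h_split : exp (-y ^ 2 / (2 * w)) = exp (-y ^ 2 / (4 * w)) * exp (-y ^ 2 / (4 * w)) := by
    rw [← exp_add]; ring_nf
  have h_lin : y ^ 2 / (4 * w) ≤ exp (y ^ 2 / (4 * w)) := by
    linarith [add_one_le_exp (y ^ 2 / (4 * w))]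
  have h_sq : y ^ 2 * exp (-y ^ 2 / (2 * w)) ≤ 4 * w * exp (-y ^ 2 / (4 * w)) :=
    calc y ^ 2 * exp (-y ^ 2 / (2 * w))
        = 4 * w * (y ^ 2 / (4 * w) * exp (-y ^ 2 / (4 * w))) * exp (-y ^ 2 / (4 * w)) := by
          rw [h_split]; field_simp
      _ ≤ 4 * w * (exp (y ^ 2 / (4 * w)) * exp (-y ^ 2 / (4 * w))) * exp (-y ^ 2 / (4 * w)) := by
          gcongr
      _ = 4 * w * exp (-y ^ 2 / (4 * w)) := by
          rw [← exp_add, neg_div, add_neg_cancel, exp_zero, mul_one]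
  have h_mono : exp (-y ^ 2 / (2 * w)) ≤ exp (-y ^ 2 / (4 * w)) := by
    rw [exp_le_exp, neg_div, neg_div, neg_le_neg_iff]
    gcongr
    linarith
  calc |y| * exp (-y ^ 2 / (2 * w)) ≤ (1 + y ^ 2) * exp (-y ^ 2 / (2 * w)) := by gcongr
    _ ≤ (1 + 4 * w) * exp (-y ^ 2 / (4 * w)) := by nlinarith

lemma hasDerivAt_gaussDens (v x : ℝ) :
    HasDerivAt (gaussDens v) (-(x * gaussDens v x) / v) x := by
  refine ((((hasDerivAt_pow 2 x).neg.div_const (2 * v)).exp.const_mul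
    (√(2 * π * v))⁻¹)).congr_deriv ?_
  simp only [gaussDens, Pi.neg_apply]
  field_simp
  ring

section WrappedGaussian

variable {v : ℝ}

lemma gaussDens_pos (hv : 0 < v) (x : ℝ) : 0 < gaussDens v x := by
  unfold gaussDens; positivity

lemma norm_mul_gaussDens_add_le (hv : 0 < v) (a : ℝ) {h : ℝ} (hh : |h| ≤ 1) :
    ‖(a + h) * gaussDens v (a + h)‖ ≤
      (√(2 * π * v))⁻¹ * (1 + 4 * v) * exp (1 / (4 * v)) * exp (-a ^ 2 / (8 * v)) := by
  set c := (√(2 * π * v))⁻¹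
  have h_sq : h ^ 2 ≤ 1 := by nlinarith [sq_abs h, abs_nonneg h]
  calc ‖(a + h) * gaussDens v (a + h)‖
      = c * (|a + h| * exp (-(a + h) ^ 2 / (2 * v))) := by
        rw [norm_mul, norm_of_nonneg (gaussDens_pos hv _).le, Real.norm_eq_abs, gaussDens]
        ring
    _ ≤ c * ((1 + 4 * v) * exp (-(a + h) ^ 2 / (4 * v))) :=
        mul_le_mul_of_nonneg_left (abs_mul_exp_neg_sq_div_le hv _) (by positivity)
    _ ≤ c * ((1 + 4 * v) * (exp (h ^ 2 / (4 * v)) * exp (-a ^ 2 / (2 * (4 * v))))) := by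
        gcongr
        exact exp_neg_sq_add_div_le (by positivity) a h
    _ ≤ c * ((1 + 4 * v) * (exp (1 / (4 * v)) * exp (-a ^ 2 / (2 * (4 * v))))) := by
        gcongr
    _ = c * (1 + 4 * v) * exp (1 / (4 * v)) * exp (-a ^ 2 / (8 * v)) := by
        ring_nf

lemma summable_gaussDens_wrap (hv : 0 < v) (b : ℝ) :
    Summable fun k : ℤ => gaussDens v (b + 2 * k * π) :=
  (summable_exp_neg_sq_add_two_mul_int_mul_pi (by positivity) b).mul_left _

lemma summable_mul_gaussDens_wrap (hv : 0 < v) (b : ℝ) :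
    Summable fun k : ℤ => (b + 2 * k * π) * gaussDens v (b + 2 * k * π) := by
  refine .of_norm_bounded
    ((summable_exp_neg_sq_add_two_mul_int_mul_pi (w := 8 * v) (by positivity) b).mul_left
      ((√(2 * π * v))⁻¹ * (1 + 4 * v) * exp (1 / (4 * v)))) fun k => ?_
  simpa using norm_mul_gaussDens_add_le hv (b + 2 * k * π) (h := 0) (by simp)

lemma fWN_pos (hv : 0 < v) (μ θ : ℝ) : 0 < fWN μ v θ :=
  (summable_gaussDens_wrap hv (θ - μ)).tsum_pos (fun _ => (gaussDens_pos hv _).le) 0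
    (gaussDens_pos hv _)

theorem hasDerivAt_fWN (hv : 0 < v) (μ θ : ℝ) :
    HasDerivAt (fWN μ v)
      (-(∑' k : ℤ, (θ - μ + 2 * k * π) * gaussDens v (θ - μ + 2 * k * π)) / v) θ := by
  rw [← tsum_neg, ← tsum_div_const]
  refine hasDerivAt_tsum_of_isPreconnected (g := fun (k : ℤ) x => gaussDens v (x - μ + 2 * k * π))
    (g' := fun (k : ℤ) x => -((x - μ + 2 * k * π) * gaussDens v (x - μ + 2 * k * π)) / v)
    ((summable_exp_neg_sq_add_two_mul_int_mul_pi (w := 8 * v) (by positivity) (θ - μ)).mul_left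
      ((√(2 * π * v))⁻¹ * (1 + 4 * v) * exp (1 / (4 * v)) / v))
    Metric.isOpen_ball (convex_ball θ 1).isPreconnected (fun k x _ => ?_) (fun k x hx => ?_)
    (Metric.mem_ball_self one_pos) (summable_gaussDens_wrap hv (θ - μ))
    (Metric.mem_ball_self one_pos)
  · have h := (hasDerivAt_gaussDens v _).comp x
      (((hasDerivAt_id' x).sub_const μ).add_const (2 * k * π))
    rwa [mul_one] at h
  · have hx' : |x - θ| ≤ 1 := (Metric.mem_ball.mp hx).le
    have h_split : x - μ + 2 * k * π = (θ - μ + 2 * k * π) + (x - θ) := by ring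
    rw [h_split, norm_div, norm_neg, norm_of_nonneg hv.le, ← mul_div_right_comm]
    gcongr
    exact norm_mul_gaussDens_add_le hv _ hx'

lemma summable_two_mul_int_mul_pi_mul_gaussDens (hv : 0 < v) (b : ℝ) :
    Summable fun k : ℤ => 2 * k * π * gaussDens v (b + 2 * k * π) :=
  ((summable_mul_gaussDens_wrap hv b).sub ((summable_gaussDens_wrap hv b).mul_left b)).congr
    fun k => by ring

lemma tsum_mul_gaussDens_wrap (hv : 0 < v) (μ θ : ℝ) :
    ∑' k : ℤ, (θ - μ + 2 * k * π) * gaussDens v (θ - μ + 2 * k * π) =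
      (θ - μ) * fWN μ v θ + ∑' k : ℤ, 2 * k * π * gaussDens v (θ - μ + 2 * k * π) := by
  rw [fWN, ← tsum_mul_left, ← ((summable_gaussDens_wrap hv _).mul_left _).tsum_add
    (summable_two_mul_int_mul_pi_mul_gaussDens hv _)]
  exact tsum_congr fun k => by ring

end WrappedGaussian

/-- Langevin drift of the one-dimensional WN process: `f_WN(·; μ, σ²/(2α))` is
differentiable, the series `∑_k 2kπ·w_k(θ)` converges, and the Langevin drift
`(σ²/2)·(log f_WN)'(θ)` equals the WN drift `α(μ − θ − ∑_k 2kπ·w_k(θ))`. -/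
theorem wn_langevin_drift (α μ σ : ℝ) (hα : 0 < α) (hσ : 0 < σ) :
    (∀ θ : ℝ, DifferentiableAt ℝ (fun θ' : ℝ => fWN μ (σ ^ 2 / (2 * α)) θ') θ) ∧
    (∀ θ : ℝ, Summable (fun k : ℤ => 2 * (k : ℝ) * Real.pi * wnWeight α μ σ k θ)) ∧
    (∀ θ : ℝ,
      σ ^ 2 / 2 * deriv (fun θ' : ℝ => Real.log (fWN μ (σ ^ 2 / (2 * α)) θ')) θ =
        α * (μ - θ - ∑' k : ℤ, 2 * (k : ℝ) * Real.pi * wnWeight α μ σ k θ)) := by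
  set v := σ ^ 2 / (2 * α) with hv_def
  have hv : 0 < v := by positivity
  have h_weight : ∀ θ, (fun k : ℤ => 2 * k * π * wnWeight α μ σ k θ) =
      fun k : ℤ => 2 * k * π * gaussDens v (θ - μ + 2 * k * π) / fWN μ v θ :=
    fun θ => funext fun k => (mul_div_assoc _ _ _).symm
  refine ⟨fun θ => (hasDerivAt_fWN hv μ θ).differentiableAt, fun θ => ?_, fun θ => ?_⟩
  · rw [h_weight]
    exact (summable_two_mul_int_mul_pi_mul_gaussDens hv _).div_const _
  · have h_sum : ∑' k : ℤ, 2 * k * π * wnWeight α μ σ k θ =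
        (∑' k : ℤ, 2 * k * π * gaussDens v (θ - μ + 2 * k * π)) / fWN μ v θ := by
      rw [h_weight]
      exact tsum_div_const
    have h_σ : σ ^ 2 = 2 * α * v := by rw [hv_def]; field_simp
    have h_f : fWN μ v θ ≠ 0 := (fWN_pos hv μ θ).ne'
    rw [((hasDerivAt_fWN hv μ θ).log h_f).deriv, h_sum,
      tsum_mul_gaussDens_wrap hv, h_σ]
    generalize ∑' k : ℤ, 2 * k * π * gaussDens v (θ - μ + 2 * k * π) = S
    field_simp
    ring
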